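/- arXiv:2504.12019 — 4 statements merged into one kernel-verified Lean document; each statement's English description precedes it below -/
import Mathlib

section
/- Let S = ⟨a₁,…,aₙ⟩ ⊆ ℕ^d be an affine semigroup (the submonoid of ℕ^d generated by a₁,…,aₙ), and let b, c ∈ S with b = Σᵢ βᵢaᵢ and c = Σᵢ γᵢaᵢ for βᵢ, γᵢ ∈ ℕ. Let I_A ⊆ k[x₁,…,xₙ] be the toric ideal of A = {a₁,…,aₙ}, i.e. the kernel of the k-algebra map k[x₁,…,xₙ] → k[t₁,…,t_d] sending xᵢ to t^{aᵢ}. Then b − c ∈ S (i.e. there exists s ∈ S with b = c + s) if and only if the monomial x^β belongs to the ideal I_A + ⟨x^γ⟩. -/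
/-!
Under `φ : xᵢ ↦ t^{aᵢ}` the monomial `x^β` goes to `t^b`, and every polynomial goes to one
supported in `S`. If `b = c + s` with `s = Σ δᵢaᵢ`, then `x^β - x^{γ+δ} ∈ I_A` and
`x^{γ+δ} ∈ ⟨x^γ⟩`. Conversely, applying `φ` to `x^β = f + g x^γ` with `f ∈ I_A` gives
`t^b = φ(g) t^c`, so `b - c` lies in the support of `φ(g)`, hence in `S`.
-/

open MvPolynomial

section ToricMap

variable {R σ τ : Type*} [CommSemiring R] [Fintype σ] (a : σ → τ →₀ ℕ)

theorem aeval_monomial_one_monomial (β : σ →₀ ℕ) (r : R) :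
    aeval (fun i => monomial (a i) (1 : R)) (monomial β r) = monomial (∑ i, β i • a i) r := by
  rw [aeval_monomial, Finsupp.prod_fintype _ _ fun i => pow_zero _]
  simp_rw [monomial_pow, one_pow, ← monomial_sum_one, algebraMap_eq, C_mul_monomial, mul_one]

theorem mem_closure_of_mem_support_aeval_monomial_one {p : MvPolynomial σ R} {e : τ →₀ ℕ}
    (he : e ∈ (aeval (fun i => monomial (a i) (1 : R)) p).support) :
    e ∈ AddSubmonoid.closure (Set.range a) := by
  classical
  induction p using MvPolynomial.induction_on' with
  | monomial β r =>
    rw [aeval_monomial_one_monomial] at he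
    rw [Finset.mem_singleton.mp (support_monomial_subset he)]
    exact AddSubmonoid.sum_mem _ fun i _ =>
      AddSubmonoid.nsmul_mem _ (AddSubmonoid.subset_closure (Set.mem_range_self i)) _
  | add p q hp hq =>
    rw [map_add] at he
    exact (Finset.mem_union.mp (support_add he)).elim hp hq

end ToricMap

theorem MvPolynomial.exists_mem_support_of_monomial_eq_mul_monomial
    {R σ : Type*} [CommSemiring R] [Nontrivial R] {p : MvPolynomial σ R} {b c : σ →₀ ℕ}
    (h : monomial b (1 : R) = p * monomial c 1) : ∃ e ∈ p.support, b = c + e := by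
  classical
  have hcoeff := congrArg (coeff b) h
  rw [coeff_monomial, if_pos rfl, coeff_mul_monomial'] at hcoeff
  split_ifs at hcoeff with hcb
  · refine ⟨b - c, mem_support_iff.mpr ?_, (add_tsub_cancel_of_le hcb).symm⟩
    rw [mul_one] at hcoeff
    exact hcoeff ▸ one_ne_zero
  · exact absurd hcoeff one_ne_zero

theorem stmt_0_general (k : Type*) [Field k] (d n : ℕ)
    (a : Fin n → (Fin d →₀ ℕ))
    (S : AddSubmonoid (Fin d →₀ ℕ)) (hS : S = AddSubmonoid.closure (Set.range a))
    (IA : Ideal (MvPolynomial (Fin n) k))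
    (hIA : IA = RingHom.ker (MvPolynomial.aeval
      (fun i => MvPolynomial.monomial (a i) (1 : k))).toRingHom)
    (β γ : Fin n →₀ ℕ) :
    (∃ s ∈ S, (∑ i, β i • a i) = (∑ i, γ i • a i) + s) ↔
      MvPolynomial.monomial β (1 : k) ∈ IA ⊔ Ideal.span {MvPolynomial.monomial γ (1 : k)} := by
  subst hS hIA
  set φ := aeval (R := k) fun i => monomial (a i) (1 : k)
  rw [Submodule.mem_sup]
  constructor
  · rintro ⟨s, hs, hb⟩
    obtain ⟨δ, rfl⟩ := AddSubmonoid.mem_closure_range_iff.mp hs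
    rw [Finsupp.sum_fintype δ (fun i m => m • a i) fun _ => zero_smul _ _] at hb
    have hφ : φ (monomial (γ + δ) 1) = φ (monomial β 1) := by
      simp only [φ, aeval_monomial_one_monomial, hb, Finsupp.add_apply, add_smul,
        Finset.sum_add_distrib]
    refine ⟨monomial β 1 - monomial (γ + δ) 1, ?_, monomial (γ + δ) 1, ?_, sub_add_cancel _ _⟩
    · exact RingHom.mem_ker.mpr (by simp [hφ])
    · exact Ideal.mem_span_singleton'.mpr ⟨monomial δ 1, by rw [monomial_mul, one_mul, add_comm]⟩
  · rintro ⟨f, hf, q, hq, hfg⟩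
    obtain ⟨g, rfl⟩ := Ideal.mem_span_singleton'.mp hq
    have h : monomial (∑ i, β i • a i) (1 : k) = φ g * monomial (∑ i, γ i • a i) 1 := by
      have hf0 : φ f = 0 := RingHom.mem_ker.mp hf
      have := congrArg φ hfg
      rwa [map_add, map_mul, hf0, zero_add, aeval_monomial_one_monomial,
        aeval_monomial_one_monomial, eq_comm] at this
    obtain ⟨e, he, hb⟩ := exists_mem_support_of_monomial_eq_mul_monomial h
    exact ⟨e, mem_closure_of_mem_support_aeval_monomial_one a he, hb⟩

/-- Let `S ⊆ ℕ^d` be the affine monoid generated by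
`A = {a₁,…,aₙ}` (nonzero vectors), `I_A ⊆ k[x₁,…,xₙ]` the toric ideal (kernel
of `xᵢ ↦ t^{aᵢ}`), and `b = Σ βᵢaᵢ`, `c = Σ γᵢaᵢ` elements of `S`.  Then
`b − c ∈ S` (i.e. `∃ s ∈ S, b = c + s`) iff the monomial `x^β` belongs to
`I_A + ⟨x^γ⟩`. -/
theorem stmt_0 (k : Type*) [Field k] (d n : ℕ)
    (a : Fin n → (Fin d →₀ ℕ)) (ha : ∀ i, a i ≠ 0)
    (S : AddSubmonoid (Fin d →₀ ℕ)) (hS : S = AddSubmonoid.closure (Set.range a))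
    (IA : Ideal (MvPolynomial (Fin n) k))
    (hIA : IA = RingHom.ker (MvPolynomial.aeval
      (fun i => MvPolynomial.monomial (a i) (1 : k))).toRingHom)
    (β γ : Fin n →₀ ℕ) :
    (∃ s ∈ S, (∑ i, β i • a i) = (∑ i, γ i • a i) + s) ↔
      MvPolynomial.monomial β (1 : k) ∈ IA ⊔ Ideal.span {MvPolynomial.monomial γ (1 : k)} :=
  stmt_0_general k d n a S hS IA hIA β γ
end

section
/- Let S ⊆ ℕ^d be an affine monoid generated by A = {a₁,…,aₙ} where a_{n−d+i} = ω_{n−d+i}εᵢ for positive integers ω_{n−d+i} and εᵢ the standard basis (i = 1,…,d), and suppose the cone generated by A equals the nonnegative orthant cone spanned by e₁ := a_{n−d+1},…,e_d := aₙ. Then the Apery set AP_S := {s ∈ S : s − eᵢ ∉ S for all i = 1,…,d} is a finite set. -/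
/-!
Write `s ∈ S` as `∑ⱼ kⱼ aⱼ`. Some positive multiple `mⱼ aⱼ` of each generator is a nonzero element
of the monoid generated by the `eᵢ`, so it is `eᵢ + r` for some `i` and some `r` in that monoid.
Hence if `kⱼ ≥ mⱼ` for some `j`, then `s − eᵢ ∈ S`. Every element of the Apéry set therefore has
a representation with `kⱼ < mⱼ` for all `j`, and there are finitely many such sums.
-/

open Set AddSubmonoid

variable {M : Type*} [AddCommMonoid M]

def aperySet {κ : Type*} (S : AddSubmonoid M) (e : κ → M) : Set M :=
  {s | s ∈ S ∧ ∀ i, ¬ ∃ s' ∈ S, s = e i + s'}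

theorem AddSubmonoid.exists_add_of_mem_closure {s : Set M} {x : M} (hx : x ∈ closure s)
    (hx0 : x ≠ 0) : ∃ y ∈ s, ∃ r ∈ closure s, x = y + r := by
  induction hx using closure_induction with
  | mem x hx => exact ⟨x, hx, 0, zero_mem _, (add_zero x).symm⟩
  | zero => exact absurd rfl hx0
  | add x z _ hz ihx ihz =>
    by_cases hx0' : x = 0
    · subst hx0'
      rw [zero_add] at hx0 ⊢
      exact ihz hx0
    · obtain ⟨y, hy, r, hr, rfl⟩ := ihx hx0'
      exact ⟨y, hy, r + z, add_mem hr hz, add_assoc y r z⟩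

section Apery

variable {κ : Type*} {S : AddSubmonoid M} {e : κ → M}

theorem add_notMem_aperySet (he : closure (range e) ≤ S) {x y : M}
    (hx : x ∈ closure (range e)) (hx0 : x ≠ 0) (hy : y ∈ S) : x + y ∉ aperySet S e := by
  rintro ⟨-, hap⟩
  obtain ⟨-, ⟨i, rfl⟩, r, hr, rfl⟩ := exists_add_of_mem_closure hx hx0
  exact hap i ⟨r + y, add_mem (he hr) hy, add_assoc _ _ _⟩

theorem aperySet_closure_finite {ι : Type*} [Fintype ι] (a : ι → M)
    (he : ∀ i, e i ∈ closure (range a)) (m : ι → ℕ)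
    (hm : ∀ j, m j • a j ∈ closure (range e)) (hm0 : ∀ j, m j • a j ≠ 0) :
    (aperySet (closure (range a)) e).Finite := by
  classical
  have heS : closure (range e) ≤ closure (range a) := closure_le.2 (range_subset_iff.2 he)
  have haS (j : ι) : a j ∈ closure (range a) := subset_closure (mem_range_self j)
  refine (finite_range fun k : ∀ j, Fin (m j) ↦ ∑ j, (k j : ℕ) • a j).subset ?_
  rintro s hs
  obtain ⟨k, rfl⟩ := exists_of_mem_closure_range a s hs.1
  suffices hk : ∀ j, k j < m j from ⟨fun j ↦ ⟨k j, hk j⟩, rfl⟩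
  intro j
  by_contra! hkj
  refine add_notMem_aperySet heS (hm j) (hm0 j)
    (y := (k j - m j) • a j + ∑ j' ∈ Finset.univ.erase j, k j' • a j') ?_ ?_
  · exact add_mem (nsmul_mem (haS j) _) (sum_mem fun j' _ ↦ nsmul_mem (haS j') _)
  · rwa [← add_assoc, ← add_smul, Nat.add_sub_cancel' hkj,
      Finset.add_sum_erase _ (fun j' ↦ k j' • a j') (Finset.mem_univ j)]

end Apery

theorem stmt_3_general (d n : ℕ) (hdn : d ≤ n) (a : Fin n → (Fin d → ℕ))
    (ha : ∀ i, a i ≠ 0)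
    (S : AddSubmonoid (Fin d → ℕ)) (hS : S = AddSubmonoid.closure (Set.range a))
    (e : Fin d → (Fin d → ℕ))
    (hlast : ∀ i : Fin d, e i = a (Fin.cast (Nat.sub_add_cancel hdn) (Fin.natAdd (n - d) i)))
    (hcone : ∀ j : Fin n, ∃ m : ℕ, 0 < m ∧
      m • a j ∈ AddSubmonoid.closure (Set.range e)) :
    {s | s ∈ S ∧ ∀ i : Fin d, ¬ ∃ s' ∈ S, s = e i + s'}.Finite := by
  subst hS
  choose m hm hmem using hcone
  refine aperySet_closure_finite a (fun i ↦ hlast i ▸ subset_closure (mem_range_self _)) m hmem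
    fun j ↦ smul_ne_zero (hm j).ne' (ha j)

/-- Let `S ⊆ ℕ^d` be the affine monoid generated by
`A = {a₁,…,aₙ}`, where the last `d` generators are `e i = a (n-d+i) = ωᵢ εᵢ`
(positive multiples of the standard basis vectors), and suppose the cone
generated by `A` is spanned by `e₁,…,e_d` (equivalently, a positive multiple of
every generator lies in the submonoid generated by the `eᵢ`).  Then the Apery
set `AP_S = {s ∈ S : s − eᵢ ∉ S for all i}` is finite, where `s − e ∈ S` means
`∃ s' ∈ S, s = e + s'`. -/
theorem stmt_3 (d n : ℕ) (hdn : d ≤ n) (a : Fin n → (Fin d → ℕ))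
    (ha : ∀ i, a i ≠ 0)
    (S : AddSubmonoid (Fin d → ℕ)) (hS : S = AddSubmonoid.closure (Set.range a))
    (ω : Fin d → ℕ) (hω : ∀ i, 0 < ω i)
    (e : Fin d → (Fin d → ℕ)) (hedef : ∀ i j, e i j = if i = j then ω i else 0)
    (hlast : ∀ i : Fin d, e i = a (Fin.cast (Nat.sub_add_cancel hdn) (Fin.natAdd (n - d) i)))
    (hcone : ∀ j : Fin n, ∃ m : ℕ, 0 < m ∧
      m • a j ∈ AddSubmonoid.closure (Set.range e)) :
    {s | s ∈ S ∧ ∀ i : Fin d, ¬ ∃ s' ∈ S, s = e i + s'}.Finite :=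
  stmt_3_general d n hdn a ha S hS e hlast hcone
end

section
/- Let S ⊆ ℕ³ be a simplicial affine monoid with extremal rays e₁, e₂, e₃ (each a positive multiple of a standard basis vector). Define the exceptional set E_S^{3,3} := {s ∈ S : s − eᵢ ∈ S for all i; s − (eᵢ + eⱼ) ∈ S for all i ≠ j; and s − (e₁+e₂+e₃) ∉ S}. Then E_S^{3,3} is finite. -/
/-!
Two elements of the exceptional set that are congruent modulo the `ωᵢ` and comparable
coordinatewise must be equal: if `s ≤ t`, then `t = s + ∑ kᵢ eᵢ`, and a nonzero `kᵢ` would let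
`s − ∑_{j ≠ i} eⱼ ∈ S` absorb one copy of `eᵢ`, giving `t − (e₁ + e₂ + e₃) ∈ S`. So each of the
finitely many residue classes meets the exceptional set in an antichain of `ℕ³`, which is finite
by Dickson's lemma.
-/

open Finset

lemma exists_eq_add_sum_nsmul_single_of_le_of_modEq {ι : Type*} [Fintype ι] [DecidableEq ι]
    {ω : ι → ℕ} {s t : ι → ℕ} (hle : s ≤ t) (hmod : ∀ i, s i ≡ t i [MOD ω i]) :
    ∃ k : ι → ℕ, t = s + ∑ i, k i • Pi.single i (ω i) := by
  choose k hk using fun i => (Nat.modEq_iff_dvd' (hle i)).mp (hmod i)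
  refine ⟨k, funext fun j => ?_⟩
  have hkj : t j - s j = k j * ω j := (hk j).trans (mul_comm _ _)
  have hlej : s j ≤ t j := hle j
  simp only [Pi.add_apply, Finset.sum_apply, Pi.smul_apply, Pi.single_apply, smul_eq_mul, mul_ite,
    mul_zero, sum_ite_eq, mem_univ, if_true]
  omega

namespace AddSubmonoid

variable {M : Type*} [AddCommMonoid M] {S : AddSubmonoid M}

variable (S) in
/-- `S.SubMem s v` is the paper's `s − v ∈ S`. -/
def SubMem (s v : M) : Prop := ∃ t ∈ S, s = v + t

lemma subMem_zero_right {s : M} : S.SubMem s 0 ↔ s ∈ S := by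
  simp [SubMem]

lemma SubMem.add {s v x w : M} (h₁ : S.SubMem s v) (h₂ : S.SubMem x w) :
    S.SubMem (s + x) (v + w) := by
  obtain ⟨t, ht, rfl⟩ := h₁
  obtain ⟨u, hu, rfl⟩ := h₂
  exact ⟨t + u, S.add_mem ht hu, by abel⟩

lemma subMem_nsmul_self {x : M} (hx : x ∈ S) {k : ℕ} (hk : k ≠ 0) : S.SubMem (k • x) x :=
  ⟨(k - 1) • x, S.nsmul_mem hx _, by rw [← succ_nsmul', Nat.sub_one_add_one hk]⟩

variable {ι : Type*} [Fintype ι] [DecidableEq ι]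

lemma SubMem.add_sum_nsmul {e : ι → M} (he : ∀ i, e i ∈ S) {s : M} {i : ι}
    (hs : S.SubMem s (∑ j ∈ univ.erase i, e j)) {k : ι → ℕ} (hk : k i ≠ 0) :
    S.SubMem (s + ∑ j, k j • e j) (∑ j, e j) := by
  have hrest : S.SubMem (∑ j ∈ univ.erase i, k j • e j) 0 :=
    subMem_zero_right.2 (S.sum_mem fun j _ => S.nsmul_mem (he j) _)
  convert (hs.add (subMem_nsmul_self (he i) hk)).add hrest using 1 <;>
    rw [← add_sum_erase univ _ (mem_univ i)] <;> abel

variable (S) in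
/-- For `ι = Fin 3` this contains the paper's `E_S^{3,3}`. -/
def exceptionalSet (e : ι → M) : Set M :=
  {s | (∀ i, S.SubMem s (∑ j ∈ univ.erase i, e j)) ∧ ¬ S.SubMem s (∑ j, e j)}

theorem finite_exceptionalSet_single {ω : ι → ℕ} (hω : ∀ i, 0 < ω i) {S : AddSubmonoid (ι → ℕ)}
    (hS : ∀ i, Pi.single i (ω i) ∈ S) :
    (S.exceptionalSet fun i => Pi.single i (ω i)).Finite := by
  refine Set.Finite.of_finite_fibers (fun s i => s i % ω i) ?_ fun r _ => ?_
  · refine (Set.Finite.pi fun i => Set.finite_Iio (ω i)).subset ?_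
    rintro _ ⟨s, -, rfl⟩ i -
    exact Nat.mod_lt _ (hω i)
  refine WellQuasiOrderedLE.finite_of_isAntichain
    fun s ⟨⟨hs, _⟩, hsr⟩ t ⟨⟨_, ht⟩, htr⟩ hne hle => hne ?_
  obtain ⟨k, rfl⟩ := exists_eq_add_sum_nsmul_single_of_le_of_modEq hle
    fun i => congr_fun (hsr.trans htr.symm) i
  by_cases hk : ∀ i, k i = 0
  · simp [hk]
  push Not at hk
  obtain ⟨i, hi⟩ := hk
  exact absurd ((hs i).add_sum_nsmul hS hi) ht

end AddSubmonoid

open AddSubmonoid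

theorem stmt_4_general (n : ℕ) (hdn : 3 ≤ n) (a : Fin n → (Fin 3 → ℕ))
    (S : AddSubmonoid (Fin 3 → ℕ)) (hS : S = AddSubmonoid.closure (Set.range a))
    (ω : Fin 3 → ℕ) (hω : ∀ i, 0 < ω i)
    (e : Fin 3 → (Fin 3 → ℕ)) (hedef : ∀ i j, e i j = if i = j then ω i else 0)
    (hlast : ∀ i : Fin 3, e i = a (Fin.cast (Nat.sub_add_cancel hdn) (Fin.natAdd (n - 3) i))) :
    {s | s ∈ S ∧ (∀ i : Fin 3, ∃ s' ∈ S, s = e i + s') ∧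
      (∀ i j : Fin 3, i ≠ j → ∃ s' ∈ S, s = (e i + e j) + s') ∧
      ¬ ∃ s' ∈ S, s = (e 0 + e 1 + e 2) + s'}.Finite := by
  have heS : ∀ i, e i ∈ S := fun i => hS ▸ subset_closure ⟨_, (hlast i).symm⟩
  obtain rfl : e = fun i => Pi.single i (ω i) :=
    funext₂ fun i j => by simp [hedef, Pi.single_apply, eq_comm]
  refine (finite_exceptionalSet_single hω heS).subset
    fun s ⟨_, _, hpair, hnot⟩ => ⟨fun i => ?_, ?_⟩
  · obtain rfl | rfl | rfl : i = 0 ∨ i = 1 ∨ i = 2 := by omega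
    · simpa [SubMem, show univ.erase (0 : Fin 3) = {1, 2} by decide] using hpair 1 2 (by decide)
    · simpa [SubMem, show univ.erase (1 : Fin 3) = {0, 2} by decide] using hpair 0 2 (by decide)
    · simpa [SubMem, show univ.erase (2 : Fin 3) = {0, 1} by decide] using hpair 0 1 (by decide)
  · simpa [SubMem, Fin.sum_univ_three] using hnot

/-- Let `S ⊆ ℕ³` be a simplicial affine monoid with extremal rays
`e₁, e₂, e₃` (positive multiples `eᵢ = ωᵢεᵢ` of the standard basis vectors,
the last three generators of `S`).  Then the exceptional set
`E_S^{3,3} = {s ∈ S : s − eᵢ ∈ S ∀i; s − (eᵢ+eⱼ) ∈ S ∀ i ≠ j;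
s − (e₁+e₂+e₃) ∉ S}` is finite.  Here `s − v ∈ S` means `∃ s' ∈ S, s = v + s'`. -/
theorem stmt_4 (n : ℕ) (hdn : 3 ≤ n) (a : Fin n → (Fin 3 → ℕ))
    (ha : ∀ i, a i ≠ 0)
    (S : AddSubmonoid (Fin 3 → ℕ)) (hS : S = AddSubmonoid.closure (Set.range a))
    (ω : Fin 3 → ℕ) (hω : ∀ i, 0 < ω i)
    (e : Fin 3 → (Fin 3 → ℕ)) (hedef : ∀ i j, e i j = if i = j then ω i else 0)
    (hlast : ∀ i : Fin 3, e i = a (Fin.cast (Nat.sub_add_cancel hdn) (Fin.natAdd (n - 3) i)))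
    (hcone : ∀ j : Fin n, ∃ m : ℕ, 0 < m ∧
      m • a j ∈ AddSubmonoid.closure (Set.range e)) :
    {s | s ∈ S ∧ (∀ i : Fin 3, ∃ s' ∈ S, s = e i + s') ∧
      (∀ i j : Fin 3, i ≠ j → ∃ s' ∈ S, s = (e i + e j) + s') ∧
      ¬ ∃ s' ∈ S, s = (e 0 + e 1 + e 2) + s'}.Finite :=
  stmt_4_general n hdn a S hS ω hω e hedef hlast
end

section
/- Let R = k[x₁,…,xₙ], I ⊂ R an ω-homogeneous ideal for a weight vector ω ∈ (ℤ⁺)ⁿ, d = dim(R/I), and assume A = k[x_{n−d+1},…,xₙ] is a Noether normalization of R/I. Let >_ω be the ω-graded reverse lexicographic order on R and B₀ the set of monomials not in in(I) + ⟨x_{n−d+1},…,xₙ⟩. Then the classes {u + I : u ∈ B₀} form a generating set of R/I as an A-module. -/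
/-! By well-founded induction along `>_ω` (well founded because the weights are positive, so
each weighted degree contains only finitely many monomials), every monomial lies, modulo `I`, in
the `A`-span of `B₀`. A monomial `x^u ∉ B₀` is divisible either by the initial monomial of some
`f ∈ I`, and subtracting a multiple of `f` rewrites `x^u` as a combination of smaller monomials,
or by a variable `x_j` of `A`, and then `x^u = x_j · x^v` with `x^v` of smaller weighted degree. -/

open MvPolynomial

/-- `ω`-weighted degree of a monomial exponent. -/
def wdeg {N : ℕ} (ω : Fin N → ℕ) (α : Fin N →₀ ℕ) : ℕ := ∑ i, ω i * α i

/-- `ltw ω β α` means `x^β <_ω x^α` in the `ω`-graded reverse lexicographic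
order: smaller `ω`-degree, or equal `ω`-degree and the last nonzero entry of
`α − β` is negative (at the largest index where they differ, `α` is smaller). -/
def ltw {N : ℕ} (ω : Fin N → ℕ) (β α : Fin N →₀ ℕ) : Prop :=
  wdeg ω β < wdeg ω α ∨
    (wdeg ω β = wdeg ω α ∧ ∃ j, α j < β j ∧ ∀ i, j < i → α i = β i)

/-- The initial ideal of `I` w.r.t. `>_ω`: the ideal generated by the initial
monomials (the `>_ω`-largest monomials) of the nonzero elements of `I`. -/
noncomputable def inIdeal {N : ℕ} (k : Type) [Field k] (ω : Fin N → ℕ)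
    (I : Ideal (MvPolynomial (Fin N) k)) : Ideal (MvPolynomial (Fin N) k) :=
  Ideal.span {p | ∃ f ∈ I, ∃ s ∈ f.support,
    (∀ t ∈ f.support, t = s ∨ ltw ω t s) ∧ p = monomial s (1 : k)}

/-- The ideal generated by the last `d` variables of `k[x₁,…,x_{m+d}]`. -/
noncomputable def lastVarsIdeal (k : Type) [Field k] (m d : ℕ) :
    Ideal (MvPolynomial (Fin (m + d)) k) :=
  Ideal.span {p | ∃ j : Fin d, p = X (Fin.natAdd m j)}

/-- The inclusion `A = k[y₁,…,y_d] → R = k[x₁,…,x_{m+d}]` onto the last `d`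
variables. -/
noncomputable def iota (k : Type) [Field k] (m d : ℕ) :
    MvPolynomial (Fin d) k →+* MvPolynomial (Fin (m + d)) k :=
  (MvPolynomial.aeval (fun j : Fin d => MvPolynomial.X (Fin.natAdd m j))).toRingHom

/-- The `A`-algebra (hence `A`-module) structure on `R/I` via `iota`. -/
noncomputable instance quotAlgebra (k : Type) [Field k] (m d : ℕ)
    (I : Ideal (MvPolynomial (Fin (m + d)) k)) :
    Algebra (MvPolynomial (Fin d) k) (MvPolynomial (Fin (m + d)) k ⧸ I) :=
  ((Ideal.Quotient.mk I).comp (iota k m d)).toAlgebra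

set_option synthInstance.maxHeartbeats 400000

namespace MvPolynomial

variable {N : ℕ}

lemma wdeg_add (ω : Fin N → ℕ) (a b : Fin N →₀ ℕ) :
    wdeg ω (a + b) = wdeg ω a + wdeg ω b := by
  simp [wdeg, Nat.mul_add, Finset.sum_add_distrib]

lemma wdeg_single (ω : Fin N → ℕ) (i : Fin N) (c : ℕ) :
    wdeg ω (Finsupp.single i c) = ω i * c := by
  simp [wdeg, Finsupp.single_apply]

lemma apply_le_wdeg {ω : Fin N → ℕ} (hω : ∀ i, 0 < ω i) (α : Fin N →₀ ℕ) (i : Fin N) :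
    α i ≤ wdeg ω α :=
  calc α i ≤ ω i * α i := Nat.le_mul_of_pos_left _ (hω i)
    _ ≤ wdeg ω α := Finset.single_le_sum (f := fun i => ω i * α i)
        (fun _ _ => Nat.zero_le _) (Finset.mem_univ i)

lemma ltw_add_left (ω : Fin N → ℕ) (γ : Fin N →₀ ℕ) {β α : Fin N →₀ ℕ}
    (h : ltw ω β α) : ltw ω (γ + β) (γ + α) := by
  rcases h with h | ⟨hdeg, j, hj, heq⟩
  · exact Or.inl (by rw [wdeg_add, wdeg_add]; omega)
  · refine Or.inr ⟨by rw [wdeg_add, wdeg_add, hdeg], j, ?_, fun i hi => ?_⟩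
    · simp only [Finsupp.add_apply]; omega
    · simp only [Finsupp.add_apply, heq i hi]

/-- Within a fixed weighted degree `D` the entries are bounded by `D`, so reverse lexicographic
comparison becomes colexicographic comparison of `D - α`, which is well founded. -/
def ltwKey (ω : Fin N → ℕ) (α : Fin N →₀ ℕ) : ℕ ×ₗ Colex (Fin N → ℕ) :=
  toLex (wdeg ω α, toColex fun i => wdeg ω α - α i)

lemma ltwKey_lt {ω : Fin N → ℕ} (hω : ∀ i, 0 < ω i) {β α : Fin N →₀ ℕ} (h : ltw ω β α) :
    ltwKey ω β < ltwKey ω α := by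
  rw [ltwKey, ltwKey, Prod.Lex.toLex_lt_toLex]
  rcases h with h | ⟨hdeg, j, hj, heq⟩
  · exact Or.inl h
  · refine Or.inr ⟨hdeg, j, fun i hi => ?_, ?_⟩
    · simp [hdeg, heq i hi]
    · have := apply_le_wdeg hω β j
      change wdeg ω β - β j < wdeg ω α - α j
      omega

lemma wellFounded_ltw {ω : Fin N → ℕ} (hω : ∀ i, 0 < ω i) : WellFounded (ltw ω) :=
  Subrelation.wf (ltwKey_lt hω) (InvImage.wf (ltwKey ω) wellFounded_lt)

variable {k : Type} [Field k]

def IsInitialExponent (ω : Fin N → ℕ) (f : MvPolynomial (Fin N) k) (s : Fin N →₀ ℕ) : Prop :=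
  s ∈ f.support ∧ ∀ t ∈ f.support, t = s ∨ ltw ω t s

lemma inIdeal_eq_span_monomial (ω : Fin N → ℕ) (I : Ideal (MvPolynomial (Fin N) k)) :
    inIdeal k ω I = Ideal.span ((fun s => monomial s (1 : k)) ''
      {s | ∃ f ∈ I, IsInitialExponent ω f s}) := by
  unfold inIdeal IsInitialExponent
  congr 1
  ext p
  constructor
  · rintro ⟨f, hf, s, hs, hlead, rfl⟩
    exact ⟨s, ⟨f, hf, hs, hlead⟩, rfl⟩
  · rintro ⟨s, ⟨f, hf, hs, hlead⟩, rfl⟩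
    exact ⟨f, hf, s, hs, hlead, rfl⟩

lemma ltw_of_mem_support_monomial_sub_mul {ω : Fin N → ℕ} {f : MvPolynomial (Fin N) k}
    {s u : Fin N →₀ ℕ} (hf : IsInitialExponent ω f s) (hsu : s ≤ u) {t : Fin N →₀ ℕ}
    (ht : t ∈ (monomial u 1 - monomial (u - s) (coeff s f)⁻¹ * f).support) : ltw ω t u := by
  obtain ⟨hs, hlead⟩ := hf
  have hcoeff : coeff u (monomial (u - s) (coeff s f)⁻¹ * f) = 1 := by
    rw [coeff_monomial_mul', if_pos tsub_le_self, tsub_tsub_cancel_of_le hsu,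
      inv_mul_cancel₀ (mem_support_iff.mp hs)]
  have htu : t ≠ u := by
    rintro rfl
    simp [mem_support_iff, hcoeff] at ht
  rw [mem_support_iff, coeff_sub, coeff_monomial, if_neg htu.symm, zero_sub, neg_ne_zero,
    coeff_monomial_mul'] at ht
  split_ifs at ht with hle
  · have ht' : t - (u - s) ∈ f.support := mem_support_iff.mpr (right_ne_zero_of_mul ht)
    have hlt : ltw ω (t - (u - s)) s := (hlead _ ht').resolve_left fun h => htu <| by
      rw [← add_tsub_cancel_of_le hle, h, tsub_add_cancel_of_le hsu]
    simpa only [add_tsub_cancel_of_le hle, tsub_add_cancel_of_le hsu] using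
      ltw_add_left ω (u - s) hlt
  · exact absurd rfl ht

section

variable {m d : ℕ}

lemma lastVarsIdeal_eq_span_monomial :
    lastVarsIdeal k m d = Ideal.span ((fun s => monomial s (1 : k)) ''
      {s | ∃ j : Fin d, s = Finsupp.single (Fin.natAdd m j) 1}) := by
  unfold lastVarsIdeal
  congr 1
  ext p
  constructor
  · rintro ⟨j, rfl⟩
    exact ⟨_, ⟨j, rfl⟩, rfl⟩
  · rintro ⟨s, ⟨j, rfl⟩, rfl⟩
    exact ⟨j, rfl⟩

lemma exists_of_monomial_mem_inIdeal_sup_lastVarsIdeal {ω : Fin (m + d) → ℕ}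
    {I : Ideal (MvPolynomial (Fin (m + d)) k)} {u : Fin (m + d) →₀ ℕ}
    (hu : monomial u (1 : k) ∈ inIdeal k ω I ⊔ lastVarsIdeal k m d) :
    (∃ f ∈ I, ∃ s, IsInitialExponent ω f s ∧ s ≤ u) ∨
      ∃ j : Fin d, Finsupp.single (Fin.natAdd m j) 1 ≤ u := by
  rw [inIdeal_eq_span_monomial, lastVarsIdeal_eq_span_monomial, ← Ideal.span_union,
    ← Set.image_union, mem_ideal_span_monomial_image] at hu
  obtain ⟨s, ⟨f, hf, hs⟩ | ⟨j, rfl⟩, hsu⟩ := hu u (by simp [mem_support_iff])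
  · exact Or.inl ⟨f, hf, s, hs, hsu⟩
  · exact Or.inr ⟨j, hsu⟩

lemma iota_C (c : k) : iota k m d (C c) = C c := by
  simp [iota]

lemma iota_X (j : Fin d) : iota k m d (X j) = X (Fin.natAdd m j) := by
  simp [iota]

variable {I : Ideal (MvPolynomial (Fin (m + d)) k)}

lemma smul_mk (a : MvPolynomial (Fin d) k) (f : MvPolynomial (Fin (m + d)) k) :
    a • Ideal.Quotient.mk I f = Ideal.Quotient.mk I (iota k m d a * f) := by
  rw [Algebra.smul_def, map_mul]
  rfl

lemma mk_mem_of_forall_mk_monomial_mem {M : Submodule (MvPolynomial (Fin d) k)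
    (MvPolynomial (Fin (m + d)) k ⧸ I)} {f : MvPolynomial (Fin (m + d)) k}
    (hf : ∀ t ∈ f.support, Ideal.Quotient.mk I (monomial t 1) ∈ M) :
    Ideal.Quotient.mk I f ∈ M := by
  rw [f.as_sum, map_sum]
  refine Submodule.sum_mem _ fun t ht => ?_
  have hsmul : Ideal.Quotient.mk I (monomial t (coeff t f)) =
      (C (coeff t f) : MvPolynomial (Fin d) k) • Ideal.Quotient.mk I (monomial t 1) := by
    rw [smul_mk, iota_C, C_mul_monomial, mul_one]
  rw [hsmul]
  exact M.smul_mem _ (hf t ht)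

lemma mk_monomial_mem_of_forall_ltw {ω : Fin (m + d) → ℕ} (hω : ∀ i, 0 < ω i)
    {M : Submodule (MvPolynomial (Fin d) k) (MvPolynomial (Fin (m + d)) k ⧸ I)}
    {u : Fin (m + d) →₀ ℕ} (hu : monomial u (1 : k) ∈ inIdeal k ω I ⊔ lastVarsIdeal k m d)
    (ih : ∀ t, ltw ω t u → Ideal.Quotient.mk I (monomial t 1) ∈ M) :
    Ideal.Quotient.mk I (monomial u 1) ∈ M := by
  rcases exists_of_monomial_mem_inIdeal_sup_lastVarsIdeal hu with
    ⟨f, hfI, s, hs, hsu⟩ | ⟨j, hj⟩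
  · have hred : Ideal.Quotient.mk I (monomial u 1) =
        Ideal.Quotient.mk I (monomial u 1 - monomial (u - s) (coeff s f)⁻¹ * f) := by
      rw [map_sub, Ideal.Quotient.eq_zero_iff_mem.mpr (I.mul_mem_left _ hfI), sub_zero]
    rw [hred]
    exact mk_mem_of_forall_mk_monomial_mem fun t ht =>
      ih t (ltw_of_mem_support_monomial_sub_mul hs hsu ht)
  · set v := u - Finsupp.single (Fin.natAdd m j) 1
    have hvu : Finsupp.single (Fin.natAdd m j) 1 + v = u := add_tsub_cancel_of_le hj
    have hdiv : Ideal.Quotient.mk I (monomial u (1 : k)) =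
        (X j : MvPolynomial (Fin d) k) • Ideal.Quotient.mk I (monomial v 1) := by
      rw [smul_mk, iota_X, X, monomial_mul, one_mul, hvu]
    have hlt : ltw ω v u := Or.inl <| by
      rw [← hvu, wdeg_add, wdeg_single, mul_one]
      exact Nat.lt_add_of_pos_left (hω _)
    rw [hdiv]
    exact M.smul_mem _ (ih v hlt)

end

end MvPolynomial

theorem stmt_10_general (k : Type) [Field k] (m d : ℕ)
    (ω : Fin (m + d) → ℕ) (hω : ∀ i, 0 < ω i)
    (I : Ideal (MvPolynomial (Fin (m + d)) k))
    (B0 : Set (Fin (m + d) →₀ ℕ))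
    (hB0 : B0 = {u | monomial u (1 : k) ∉ inIdeal k ω I ⊔ lastVarsIdeal k m d}) :
    Submodule.span (MvPolynomial (Fin d) k)
      {x : MvPolynomial (Fin (m + d)) k ⧸ I |
        ∃ u ∈ B0, x = Ideal.Quotient.mk I (monomial u (1 : k))} = ⊤ := by
  set M := Submodule.span (MvPolynomial (Fin d) k)
    {x : MvPolynomial (Fin (m + d)) k ⧸ I |
      ∃ u ∈ B0, x = Ideal.Quotient.mk I (monomial u (1 : k))}
  have hmonomial (u : Fin (m + d) →₀ ℕ) : Ideal.Quotient.mk I (monomial u (1 : k)) ∈ M := by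
    induction u using (wellFounded_ltw hω).induction with
    | _ u ih =>
      by_cases hu : u ∈ B0
      · exact Submodule.subset_span ⟨u, hu, rfl⟩
      · rw [hB0] at hu
        exact mk_monomial_mem_of_forall_ltw hω (not_not.mp hu) ih
  rw [eq_top_iff]
  rintro x -
  obtain ⟨f, rfl⟩ := Ideal.Quotient.mk_surjective x
  exact mk_mem_of_forall_mk_monomial_mem fun t _ => hmonomial t

theorem stmt_10 (k : Type) [Field k] (m d : ℕ)
    (ω : Fin (m + d) → ℕ) (hω : ∀ i, 0 < ω i)
    (I : Ideal (MvPolynomial (Fin (m + d)) k))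
    (hhom : ∀ f ∈ I, ∀ s : ℕ, MvPolynomial.weightedHomogeneousComponent ω s f ∈ I)
    (hdim : ringKrullDim (MvPolynomial (Fin (m + d)) k ⧸ I) = (d : ℕ))
    (hinj : Function.Injective ((Ideal.Quotient.mk I).comp (iota k m d)))
    (hint : RingHom.IsIntegral ((Ideal.Quotient.mk I).comp (iota k m d)))
    (B0 : Set (Fin (m + d) →₀ ℕ))
    (hB0 : B0 = {u | monomial u (1 : k) ∉ inIdeal k ω I ⊔ lastVarsIdeal k m d}) :
    Submodule.span (MvPolynomial (Fin d) k)
      {x : MvPolynomial (Fin (m + d)) k ⧸ I |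
        ∃ u ∈ B0, x = Ideal.Quotient.mk I (monomial u (1 : k))} = ⊤ :=
  stmt_10_general k m d ω hω I B0 hB0
end
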